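/- Let α ∈ (−1,1) and n ∈ ℤ, n ≠ 0. The two-dimensional solution space on (0,1) of the Fourier-mode ODE u''(x) − (α/x)u'(x) − n²x^{2α}u(x) = 0 has a basis u₁, u₂ with u₁(x) → c₁ ≠ 0 and u₂(x)/x^{1+α} → c₂ ≠ 0 as x → 0⁺, and both u₁, u₂ lie in L²((0,1), x^{-α}dx). -/

import Mathlib

open MeasureTheory Set

lemma aux1 (α : ℝ) (c : ℝ) (f g : ℝ → ℝ)
    (hf : ∀ y, HasDerivAt f (g y) y) {x : ℝ} (hx : 0 < x) :
    HasDerivAt (fun x : ℝ => f (c * x ^ (1 + α)))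
      (c * (1 + α) * x ^ α * g (c * x ^ (1 + α))) x := by
  have h1 : HasDerivAt (fun x : ℝ => x ^ (1 + α)) ((1 + α) * x ^ (1 + α - 1)) x :=
    Real.hasDerivAt_rpow_const (Or.inl hx.ne')
  have h2 := (h1.const_mul c)
  have h3 := (hf (c * x ^ (1 + α))).comp x h2
  refine h3.congr_deriv ?_
  rw [show (1 : ℝ) + α - 1 = α by ring]
  ring

lemma aux2 (α : ℝ) (c : ℝ) (f g : ℝ → ℝ)
    (hf : ∀ y, HasDerivAt f (g y) y) (hg : ∀ y, HasDerivAt g (f y) y) {x : ℝ} (hx : 0 < x) :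
    HasDerivAt (fun x : ℝ => c * (1 + α) * x ^ α * g (c * x ^ (1 + α)))
      (α / x * (c * (1 + α) * x ^ α * g (c * x ^ (1 + α)))
        + (c * (1 + α)) ^ 2 * x ^ (2 * α) * f (c * x ^ (1 + α))) x := by
  have h1 : HasDerivAt (fun x : ℝ => c * (1 + α) * x ^ α) (c * (1 + α) * (α * x ^ (α - 1))) x :=
    (Real.hasDerivAt_rpow_const (Or.inl hx.ne')).const_mul _
  have h2 := aux1 α c g f hg hx
  have h3 := h1.mul h2
  refine h3.congr_deriv ?_
  have e1 : x ^ (α - 1) = x ^ α / x := by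
    rw [Real.rpow_sub hx, Real.rpow_one]
  have e2 : x ^ (2 * α) = x ^ α * x ^ α := by
    rw [← Real.rpow_add hx]; ring_nf
  rw [e1, e2]
  field_simp

lemma aux3 (α N aa bb s : ℝ) (haa0 : 0 < aa) (hab : aa ≤ bb) (hsa : aa ≤ s) (hsb : s ≤ bb)
    (hN : 0 ≤ N) (p q : ℝ × ℝ) :
    dist ((p.2, α / s * p.2 + N * s ^ (2 * α) * p.1) : ℝ × ℝ)
      ((q.2, α / s * q.2 + N * s ^ (2 * α) * q.1) : ℝ × ℝ) ≤
      (1 + |α| / aa + N * (aa ^ (2 * α) + bb ^ (2 * α))) * dist p q := by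
  have hs0 : 0 < s := lt_of_lt_of_le haa0 hsa
  have hc1 : |α / s| ≤ |α| / aa := by
    rw [abs_div, abs_of_pos hs0]
    gcongr
  have hc2 : s ^ (2 * α) ≤ aa ^ (2 * α) + bb ^ (2 * α) := by
    rcases le_total 0 (2 * α) with h | h
    · have h5 : s ^ (2 * α) ≤ bb ^ (2 * α) := Real.rpow_le_rpow hs0.le hsb h
      have h6 : (0:ℝ) < aa ^ (2 * α) := Real.rpow_pos_of_pos haa0 _
      linarith
    · have h5 : s ^ (2 * α) ≤ aa ^ (2 * α) := Real.rpow_le_rpow_of_nonpos haa0 hsa h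
      have h6 : (0:ℝ) < bb ^ (2 * α) := Real.rpow_pos_of_pos (lt_of_lt_of_le haa0 hab) _
      linarith
  have hC0 : (0:ℝ) ≤ N * s ^ (2 * α) := mul_nonneg hN (Real.rpow_pos_of_pos hs0 _).le
  simp only [Prod.dist_eq, Real.dist_eq]
  have hd1 : |p.1 - q.1| ≤ max |p.1 - q.1| |p.2 - q.2| := le_max_left _ _
  have hd2 : |p.2 - q.2| ≤ max |p.1 - q.1| |p.2 - q.2| := le_max_right _ _
  have hdnn : (0:ℝ) ≤ max |p.1 - q.1| |p.2 - q.2| := le_trans (abs_nonneg _) hd1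
  have haA : (0:ℝ) ≤ |α| / aa := div_nonneg (abs_nonneg _) haa0.le
  have hP : (0:ℝ) < aa ^ (2 * α) := Real.rpow_pos_of_pos haa0 _
  have hQ : (0:ℝ) < bb ^ (2 * α) := Real.rpow_pos_of_pos (lt_of_lt_of_le haa0 hab) _
  have hB : (0:ℝ) ≤ N * (aa ^ (2 * α) + bb ^ (2 * α)) := mul_nonneg hN (by positivity)
  apply max_le
  · nlinarith [mul_nonneg haA hdnn, mul_nonneg hB hdnn]
  · have habs : |(α / s * p.2 + N * s ^ (2 * α) * p.1) -
        (α / s * q.2 + N * s ^ (2 * α) * q.1)| ≤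
        |α / s| * |p.2 - q.2| + (N * s ^ (2 * α)) * |p.1 - q.1| := by
      rw [show (α / s * p.2 + N * s ^ (2 * α) * p.1) - (α / s * q.2 + N * s ^ (2 * α) * q.1)
          = α / s * (p.2 - q.2) + (N * s ^ (2 * α)) * (p.1 - q.1) by ring]
      refine (abs_add_le _ _).trans ?_
      rw [abs_mul, abs_mul, abs_of_nonneg hC0]
    refine habs.trans ?_
    have e1 : |α / s| * |p.2 - q.2| ≤ (|α| / aa) * max |p.1 - q.1| |p.2 - q.2| :=
      mul_le_mul hc1 hd2 (abs_nonneg _) haA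
    have e2 : (N * s ^ (2 * α)) * |p.1 - q.1| ≤
        (N * (aa ^ (2 * α) + bb ^ (2 * α))) * max |p.1 - q.1| |p.2 - q.2| := by
      apply mul_le_mul _ hd1 (abs_nonneg _) (mul_nonneg hN (by positivity))
      exact mul_le_mul_of_nonneg_left hc2 hN
    nlinarith [mul_nonneg haA hdnn, mul_nonneg hB hdnn]
  
/-- For `α ∈ (−1,1)` and `n ≠ 0`, the Fourier-mode ODE
`u'' − (α/x)u' − n²x^{2α}u = 0` on `(0,1)` has a basis of solutions `u₁, u₂`
with `u₁ → c₁ ≠ 0` and `u₂/x^{1+α} → c₂ ≠ 0` as `x → 0⁺`, both lying in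
`L²((0,1), x^{-α}dx)`, and every (C²) solution is a linear combination of them. -/
theorem stmt19 (α : ℝ) (hα : α ∈ Ioo (-1:ℝ) 1) (n : ℤ) (hn : n ≠ 0) :
    ∃ u₁ u₂ : ℝ → ℝ,
      ContDiffOn ℝ 2 u₁ (Ioo 0 1) ∧ ContDiffOn ℝ 2 u₂ (Ioo 0 1) ∧
      (∀ x ∈ Ioo (0:ℝ) 1,
        deriv (deriv u₁) x - (α / x) * deriv u₁ x - (n:ℝ) ^ 2 * x ^ (2 * α) * u₁ x = 0) ∧
      (∀ x ∈ Ioo (0:ℝ) 1,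
        deriv (deriv u₂) x - (α / x) * deriv u₂ x - (n:ℝ) ^ 2 * x ^ (2 * α) * u₂ x = 0) ∧
      (∃ c₁ : ℝ, c₁ ≠ 0 ∧ Filter.Tendsto u₁ (nhdsWithin 0 (Ioi 0)) (nhds c₁)) ∧
      (∃ c₂ : ℝ, c₂ ≠ 0 ∧
        Filter.Tendsto (fun x : ℝ => u₂ x / x ^ (1 + α)) (nhdsWithin 0 (Ioi 0)) (nhds c₂)) ∧
      IntegrableOn (fun x : ℝ => (u₁ x) ^ 2 * x ^ (-α)) (Ioo 0 1) ∧
      IntegrableOn (fun x : ℝ => (u₂ x) ^ 2 * x ^ (-α)) (Ioo 0 1) ∧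
      (∀ u : ℝ → ℝ, ContDiffOn ℝ 2 u (Ioo 0 1) →
        (∀ x ∈ Ioo (0:ℝ) 1,
          deriv (deriv u) x - (α / x) * deriv u x - (n:ℝ) ^ 2 * x ^ (2 * α) * u x = 0) →
        ∃ a b : ℝ, ∀ x ∈ Ioo (0:ℝ) 1, u x = a * u₁ x + b * u₂ x) := by
  obtain ⟨hα1, hα2⟩ := hα
  have h1α : (0:ℝ) < 1 + α := by linarith
  set c : ℝ := n / (1 + α) with hc_def
  have hcn : c * (1 + α) = (n : ℝ) := div_mul_cancel₀ _ h1α.ne'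
  have hc0 : c ≠ 0 := by
    simp only [hc_def, div_ne_zero_iff]
    exact ⟨Int.cast_ne_zero.mpr hn, h1α.ne'⟩
  set u₁ : ℝ → ℝ := fun x => Real.cosh (c * x ^ (1 + α)) with hu₁_def
  set u₂ : ℝ → ℝ := fun x => Real.sinh (c * x ^ (1 + α)) with hu₂_def
  set v₁ : ℝ → ℝ := fun x => c * (1 + α) * x ^ α * Real.sinh (c * x ^ (1 + α)) with hv₁_def
  set v₂ : ℝ → ℝ := fun x => c * (1 + α) * x ^ α * Real.cosh (c * x ^ (1 + α)) with hv₂_def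
  have hd₁ : ∀ x : ℝ, 0 < x → HasDerivAt u₁ (v₁ x) x := fun x hx =>
    aux1 α c Real.cosh Real.sinh Real.hasDerivAt_cosh hx
  have hd₂ : ∀ x : ℝ, 0 < x → HasDerivAt u₂ (v₂ x) x := fun x hx =>
    aux1 α c Real.sinh Real.cosh Real.hasDerivAt_sinh hx
  have hdv₁ : ∀ x : ℝ, 0 < x → HasDerivAt v₁
      (α / x * v₁ x + (n:ℝ) ^ 2 * x ^ (2 * α) * u₁ x) x := fun x hx => by
    have := aux2 α c Real.cosh Real.sinh Real.hasDerivAt_cosh Real.hasDerivAt_sinh hx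
    rw [show ((n:ℝ)) = c * (1 + α) from hcn.symm]
    exact this
  have hdv₂ : ∀ x : ℝ, 0 < x → HasDerivAt v₂
      (α / x * v₂ x + (n:ℝ) ^ 2 * x ^ (2 * α) * u₂ x) x := fun x hx => by
    have := aux2 α c Real.sinh Real.cosh Real.hasDerivAt_sinh Real.hasDerivAt_cosh hx
    rw [show ((n:ℝ)) = c * (1 + α) from hcn.symm]
    exact this
  -- deriv facts
  have hderiv₁ : ∀ x : ℝ, 0 < x → deriv u₁ x = v₁ x := fun x hx => (hd₁ x hx).deriv
  have hderiv₂ : ∀ x : ℝ, 0 < x → deriv u₂ x = v₂ x := fun x hx => (hd₂ x hx).deriv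
  have hode : ∀ w v : ℝ → ℝ,
      (∀ x : ℝ, 0 < x → deriv w x = v x) →
      (∀ x : ℝ, 0 < x → HasDerivAt v (α / x * v x + (n:ℝ) ^ 2 * x ^ (2 * α) * w x) x) →
      ∀ x ∈ Ioo (0:ℝ) 1,
        deriv (deriv w) x - (α / x) * deriv w x - (n:ℝ) ^ 2 * x ^ (2 * α) * w x = 0 := by
    intro w v hder hdv x hx
    have hev : deriv w =ᶠ[nhds x] v :=
      Filter.eventuallyEq_of_mem (isOpen_Ioi.mem_nhds hx.1) (fun y hy => hder y hy)
    rw [hev.deriv_eq, (hdv x hx.1).deriv, hder x hx.1]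
    ring
  -- smoothness
  have hsm : ∀ f : ℝ → ℝ, ContDiff ℝ 2 f →
      ContDiffOn ℝ 2 (fun x : ℝ => f (c * x ^ (1 + α))) (Ioo 0 1) := by
    intro f hf x hx
    exact (hf.contDiffAt.comp x
      (contDiffAt_const.mul (Real.contDiffAt_rpow_const_of_ne hx.1.ne'))).contDiffWithinAt
  have hrint : IntegrableOn (fun x : ℝ => x ^ (-α)) (Ioo 0 1) := by
    have h := intervalIntegral.intervalIntegrable_rpow' (show (-1:ℝ) < -α by linarith) (a := 0) (b := 1)
    rwa [intervalIntegrable_iff_integrableOn_Ioo_of_le zero_le_one] at h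
  have hbnd : ∀ (f : ℝ → ℝ) (M : ℝ), ContinuousOn f (Ioo 0 1) →
      (∀ x ∈ Ioo (0:ℝ) 1, |f x| ≤ M) →
      IntegrableOn (fun x : ℝ => (f x) ^ 2 * x ^ (-α)) (Ioo 0 1) := by
    intro f M hcont hM
    apply Integrable.mono' (hrint.const_mul (M ^ 2))
    · exact ((hcont.pow 2).mul (ContinuousOn.rpow_const continuousOn_id
        (fun x hx => Or.inl hx.1.ne'))).aestronglyMeasurable measurableSet_Ioo
    · rw [ae_restrict_iff' measurableSet_Ioo]
      filter_upwards with x hx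
      have hxp : (0:ℝ) ≤ x ^ (-α) := (Real.rpow_pos_of_pos hx.1 _).le
      have hfM : |f x| ≤ M := hM x hx
      have h2 : f x ^ 2 ≤ M ^ 2 := by nlinarith [abs_nonneg (f x), sq_abs (f x)]
      rw [Real.norm_eq_abs, abs_mul, abs_of_nonneg hxp, abs_of_nonneg (sq_nonneg (f x))]
      exact mul_le_mul_of_nonneg_right h2 hxp
  refine ⟨u₁, u₂, hsm _ Real.contDiff_cosh, hsm _ Real.contDiff_sinh,
    hode u₁ v₁ hderiv₁ hdv₁, hode u₂ v₂ hderiv₂ hdv₂, ?_, ?_, ?_, ?_, ?_⟩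
  · -- limit of u₁
    refine ⟨1, one_ne_zero, ?_⟩
    have h0 : Filter.Tendsto (fun x : ℝ => c * x ^ (1 + α)) (nhdsWithin 0 (Ioi 0)) (nhds 0) := by
      have hcont : ContinuousAt (fun x : ℝ => x ^ (1 + α)) 0 :=
        Real.continuousAt_rpow_const 0 _ (Or.inr h1α.le)
      have h0' : Filter.Tendsto (fun x : ℝ => x ^ (1 + α)) (nhdsWithin 0 (Ioi 0)) (nhds 0) := by
        simpa [Real.zero_rpow h1α.ne'] using
          hcont.tendsto.mono_left (nhdsWithin_le_nhds (s := Ioi 0))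
      simpa using h0'.const_mul c
    have := (Real.continuous_cosh.tendsto 0).comp h0
    simpa [Function.comp_def, Real.cosh_zero] using this
  · -- limit of u₂ / x^(1+α)
    refine ⟨c, hc0, ?_⟩
    have hd : HasDerivAt (fun t : ℝ => Real.sinh (c * t)) c 0 := by
      have := (Real.hasDerivAt_sinh (c * 0)).comp 0 ((hasDerivAt_id (0:ℝ)).const_mul c)
      simp at this; exact this
    rw [hasDerivAt_iff_tendsto_slope] at hd
    have hmap : Filter.Tendsto (fun x : ℝ => x ^ (1 + α)) (nhdsWithin 0 (Ioi 0))
        (nhdsWithin 0 {(0:ℝ)}ᶜ) := by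
      rw [tendsto_nhdsWithin_iff]
      constructor
      · have hcont : ContinuousAt (fun x : ℝ => x ^ (1 + α)) 0 :=
          Real.continuousAt_rpow_const 0 _ (Or.inr h1α.le)
        simpa [Real.zero_rpow h1α.ne'] using
          hcont.tendsto.mono_left (nhdsWithin_le_nhds (s := Ioi 0))
      · filter_upwards [self_mem_nhdsWithin] with x hx
        exact (Real.rpow_pos_of_pos hx _).ne'
    have htend := hd.comp hmap
    apply htend.congr
    intro x
    simp [Function.comp_def, slope_def_field, Real.sinh_zero]
    rfl
  · -- integrability of u₁
    exact hbnd u₁ (Real.cosh |c|) (hsm _ Real.contDiff_cosh).continuousOn (fun x hx => by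
      simp only [hu₁_def]
      have h1 : |c * x ^ (1 + α)| ≤ |c| := by
        rw [abs_mul, abs_of_pos (Real.rpow_pos_of_pos hx.1 _)]
        calc |c| * x ^ (1 + α) ≤ |c| * 1 := by
              gcongr
              exact Real.rpow_le_one hx.1.le hx.2.le h1α.le
          _ = |c| := mul_one _
      rw [abs_of_pos (Real.cosh_pos _)]
      exact Real.cosh_le_cosh.2 (by simpa using h1))
  · -- integrability of u₂
    exact hbnd u₂ (Real.sinh |c|) (hsm _ Real.contDiff_sinh).continuousOn (fun x hx => by
      simp only [hu₂_def]
      have h1 : |c * x ^ (1 + α)| ≤ |c| := by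
        rw [abs_mul, abs_of_pos (Real.rpow_pos_of_pos hx.1 _)]
        calc |c| * x ^ (1 + α) ≤ |c| * 1 := by
              gcongr
              exact Real.rpow_le_one hx.1.le hx.2.le h1α.le
          _ = |c| := mul_one _
      rw [Real.abs_sinh]
      exact Real.sinh_le_sinh.2 h1)
  · -- spanning
    intro u hu hueq
    have hud : ∀ x ∈ Ioo (0:ℝ) 1, HasDerivAt u (deriv u x) x := fun x hx =>
      ((hu.differentiableOn (by norm_num)).differentiableAt (isOpen_Ioo.mem_nhds hx)).hasDerivAt
    have hu' : ContDiffOn ℝ 1 (deriv u) (Ioo 0 1) :=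
      hu.deriv_of_isOpen isOpen_Ioo (by norm_num)
    have hud2 : ∀ x ∈ Ioo (0:ℝ) 1, HasDerivAt (deriv u)
        (α / x * deriv u x + (n:ℝ) ^ 2 * x ^ (2 * α) * u x) x := by
      intro x hx
      have h := ((hu'.differentiableOn one_ne_zero).differentiableAt
        (isOpen_Ioo.mem_nhds hx)).hasDerivAt
      have he := hueq x hx
      have heq2 : deriv (deriv u) x = α / x * deriv u x + (n:ℝ) ^ 2 * x ^ (2 * α) * u x := by
        linarith
      rwa [heq2] at h
    have hx₀ : (1/2 : ℝ) ∈ Ioo (0:ℝ) 1 := by norm_num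
    set x₀ : ℝ := 1/2 with hx₀def
    have hW : u₁ x₀ * v₂ x₀ - u₂ x₀ * v₁ x₀ ≠ 0 := by
      have heq3 : u₁ x₀ * v₂ x₀ - u₂ x₀ * v₁ x₀ = c * (1 + α) * x₀ ^ α := by
        simp only [hu₁_def, hu₂_def, hv₁_def, hv₂_def]
        have h4 := Real.cosh_sq_sub_sinh_sq (c * x₀ ^ (1 + α))
        linear_combination (c * (1 + α) * x₀ ^ α) * h4
      rw [heq3, hcn]
      exact mul_ne_zero (Int.cast_ne_zero.mpr hn) (Real.rpow_pos_of_pos hx₀.1 _).ne'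
    have key : ∀ (P Q R S p q : ℝ), P * S - Q * R ≠ 0 →
        ((p * S - q * Q) / (P * S - Q * R)) * P + ((q * P - p * R) / (P * S - Q * R)) * Q = p ∧
        ((p * S - q * Q) / (P * S - Q * R)) * R + ((q * P - p * R) / (P * S - Q * R)) * S = q := by
      intro P Q R S p q hD
      constructor <;> (rw [div_mul_eq_mul_div, div_mul_eq_mul_div, ← add_div, div_eq_iff hD]; ring)
    obtain ⟨hinit1, hinit2⟩ := key (u₁ x₀) (u₂ x₀) (v₁ x₀) (v₂ x₀) (u x₀) (deriv u x₀) hW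
    set a : ℝ := (u x₀ * v₂ x₀ - deriv u x₀ * u₂ x₀) / (u₁ x₀ * v₂ x₀ - u₂ x₀ * v₁ x₀) with ha_def
    set b : ℝ := (deriv u x₀ * u₁ x₀ - u x₀ * v₁ x₀) / (u₁ x₀ * v₂ x₀ - u₂ x₀ * v₁ x₀) with hb_def
    refine ⟨a, b, ?_⟩
    intro x hx
    -- set up the compact interval
    set aa : ℝ := min x x₀ / 2 with haa_def
    set bb : ℝ := (max x x₀ + 1) / 2 with hbb_def
    have hm0 : 0 < min x x₀ := lt_min hx.1 hx₀.1
    have hM1 : max x x₀ < 1 := max_lt hx.2 hx₀.2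
    have haa0 : 0 < aa := by positivity
    have haam : aa < min x x₀ := by rw [haa_def]; linarith
    have hMbb : max x x₀ < bb := by rw [hbb_def]; linarith
    have hbb1 : bb < 1 := by rw [hbb_def]; linarith
    have hsub : Icc aa bb ⊆ Ioo (0:ℝ) 1 := fun t ht =>
      ⟨lt_of_lt_of_le haa0 ht.1, lt_of_le_of_lt ht.2 hbb1⟩
    have haabb : aa < bb := lt_trans (lt_of_lt_of_le haam (min_le_max)) hMbb
    have hx₀mem : x₀ ∈ Ioo aa bb :=
      ⟨lt_of_lt_of_le haam (min_le_right _ _), lt_of_le_of_lt (le_max_right _ _) hMbb⟩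
    have hxmem : x ∈ Icc aa bb :=
      ⟨le_of_lt (lt_of_lt_of_le haam (min_le_left _ _)),
       le_of_lt (lt_of_le_of_lt (le_max_left _ _) hMbb)⟩
    set σ : ℝ → ℝ := fun t => max aa (min bb t) with hσ_def
    have hσ_mem : ∀ t, σ t ∈ Icc aa bb := fun t =>
      ⟨le_max_left _ _, max_le haabb.le (min_le_left _ _)⟩
    have hσ_eq : ∀ t ∈ Icc aa bb, σ t = t := by
      intro t ht
      rw [hσ_def]
      simp only
      rw [min_eq_right ht.2, max_eq_right ht.1]
    set v : ℝ → ℝ × ℝ → ℝ × ℝ := fun t p =>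
      (p.2, α / σ t * p.2 + (n:ℝ) ^ 2 * (σ t) ^ (2 * α) * p.1) with hv_def
    set Kr : ℝ := 1 + |α| / aa + (n:ℝ) ^ 2 * (aa ^ (2 * α) + bb ^ (2 * α)) with hKr_def
    have hKr0 : 0 ≤ Kr := by
      have h1 : 0 ≤ |α| / aa := div_nonneg (abs_nonneg _) haa0.le
      have h2 : (0:ℝ) < aa ^ (2 * α) := Real.rpow_pos_of_pos haa0 _
      have h3 : (0:ℝ) < bb ^ (2 * α) := Real.rpow_pos_of_pos (haa0.trans haabb) _
      have h4 : (0:ℝ) ≤ (n:ℝ) ^ 2 := sq_nonneg _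
      rw [hKr_def]; nlinarith
    have hlip : ∀ t, LipschitzWith Kr.toNNReal (v t) := by
      intro t
      apply LipschitzWith.of_dist_le_mul
      intro p q
      rw [Real.coe_toNNReal _ hKr0]
      exact aux3 α ((n:ℝ) ^ 2) aa bb (σ t) haa0 haabb.le (hσ_mem t).1 (hσ_mem t).2
        (sq_nonneg _) p q
    have hlip' : ∀ t, LipschitzOnWith Kr.toNNReal (v t) (Set.univ) := fun t =>
      (hlip t).lipschitzOnWith
    set F : ℝ → ℝ × ℝ := fun t => (u t, deriv u t) with hF_def
    set G : ℝ → ℝ × ℝ := fun t => (a * u₁ t + b * u₂ t, a * v₁ t + b * v₂ t) with hG_def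
    have hF' : ∀ t ∈ Ioo (0:ℝ) 1, HasDerivAt F (deriv u t,
        α / t * deriv u t + (n:ℝ) ^ 2 * t ^ (2 * α) * u t) t := fun t ht =>
      (hud t ht).prodMk (hud2 t ht)
    have hG' : ∀ t ∈ Ioo (0:ℝ) 1, HasDerivAt G (a * v₁ t + b * v₂ t,
        α / t * (a * v₁ t + b * v₂ t) + (n:ℝ) ^ 2 * t ^ (2 * α) * (a * u₁ t + b * u₂ t)) t := by
      intro t ht
      refine HasDerivAt.prodMk (((hd₁ t ht.1).const_mul a).add ((hd₂ t ht.1).const_mul b)) ?_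
      have h := ((hdv₁ t ht.1).const_mul a).add ((hdv₂ t ht.1).const_mul b)
      refine h.congr_deriv ?_
      ring
    have hFc : ContinuousOn F (Icc aa bb) := fun t ht =>
      (hF' t (hsub ht)).continuousAt.continuousWithinAt
    have hGc : ContinuousOn G (Icc aa bb) := fun t ht =>
      (hG' t (hsub ht)).continuousAt.continuousWithinAt
    have hFode : ∀ t ∈ Ioo aa bb, HasDerivAt F (v t (F t)) t := by
      intro t ht
      have hmem := hsub (Ioo_subset_Icc_self ht)
      have := hF' t hmem
      rw [hv_def]
      simp only
      rw [hσ_eq t (Ioo_subset_Icc_self ht)]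
      exact this
    have hGode : ∀ t ∈ Ioo aa bb, HasDerivAt G (v t (G t)) t := by
      intro t ht
      have hmem := hsub (Ioo_subset_Icc_self ht)
      have := hG' t hmem
      rw [hv_def]
      simp only
      rw [hσ_eq t (Ioo_subset_Icc_self ht)]
      exact this
    have hinit : F x₀ = G x₀ := by
      rw [hF_def, hG_def]
      exact Prod.ext hinit1.symm hinit2.symm
    have heqon : EqOn F G (Icc aa bb) :=
      ODE_solution_unique_of_mem_Icc (fun t _ => hlip' t) hx₀mem hFc hFode (fun _ _ => trivial)
        hGc hGode (fun _ _ => trivial) hinit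
    have := heqon hxmem
    exact congrArg Prod.fst this
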